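/- arXiv:1412.1898 — 2 statements merged into one kernel-verified Lean document; each statement's English description precedes it below -/
import Mathlib

section
/- Let L₁,…,L_K be independent random variables where L_j has CCDF P(L_j > t) = exp(−a_j t^δ) for t ≥ 0, with a_j > 0 and δ ∈ (0,1). Let t₁,…,t_K > 0 be weights and define the association event E_k = {t_k L_k^{−1} ≥ t_j L_j^{−1} for all j}. Then P(E_k) = a_k / G_k, where G_k = ∑_{j=1}^K a_j (t_j/t_k)^δ. -/
/-!
Given `L k = x`, the event is `{(t j / t k) * x ≤ L j for all j ≠ k}`, whose probability is, by
independence, `∏_{j ≠ k} exp (-a j ((t j / t k) x) ^ δ) = exp (-B x ^ δ)` with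
`B = ∑_{j ≠ k} a j (t j / t k) ^ δ`. Since `L k ^ δ` is exponential with rate `a k`, averaging over
`L k` gives its Laplace transform at `B`, namely `a k / (a k + B)`, and `a k + B = G k`.
-/

open MeasureTheory ProbabilityTheory Finset Set Filter Topology

section

variable {Ω : Type*} [MeasurableSpace Ω]

lemma measure_le_eq_of_continuousWithinAt {μ : Measure Ω} {X : Ω → ℝ} {F : ℝ → ENNReal} {s : ℝ}
    (hF : ContinuousWithinAt F (Iio s) s)
    (hμF : ∀ᶠ r in 𝓝[<] s, μ {ω | r < X ω} = F r) (hs : μ {ω | s < X ω} = F s) :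
    μ {ω | s ≤ X ω} = F s := by
  refine le_antisymm (ge_of_tendsto hF ?_) (hs ▸ measure_mono fun ω (hω : s < X ω) => hω.le)
  filter_upwards [hμF, self_mem_nhdsWithin] with r hr hrs
  exact hr ▸ measure_mono fun ω (hω : s ≤ X ω) => lt_of_lt_of_le hrs hω

lemma measure_le_eq_of_weibull_tail {μ : Measure Ω} {X : Ω → ℝ} {a δ : ℝ}
    (htail : ∀ s : ℝ, 0 ≤ s → μ {ω | s < X ω} = ENNReal.ofReal (Real.exp (-a * s ^ δ)))
    {s : ℝ} (hs : 0 < s) :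
    μ {ω | s ≤ X ω} = ENNReal.ofReal (Real.exp (-a * s ^ δ)) := by
  refine measure_le_eq_of_continuousWithinAt
    (F := fun r => ENNReal.ofReal (Real.exp (-a * r ^ δ))) ?_ ?_ (htail s hs.le)
  · exact (ENNReal.continuous_ofReal.continuousAt.comp (Real.continuous_exp.continuousAt.comp
      (continuousAt_const.mul (Real.continuousAt_rpow_const s δ (Or.inl hs.ne')))))
      |>.continuousWithinAt
  · filter_upwards [(eventually_gt_nhds hs).filter_mono nhdsWithin_le_nhds] with r hr
    exact htail r hr.le

lemma measure_lt_rpow_of_weibull_tail {μ : Measure Ω} {X : Ω → ℝ} (hXpos : ∀ ω, 0 < X ω)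
    {a δ : ℝ} (hδ : 0 < δ)
    (htail : ∀ s : ℝ, 0 ≤ s → μ {ω | s < X ω} = ENNReal.ofReal (Real.exp (-a * s ^ δ)))
    {s : ℝ} (hs : 0 ≤ s) :
    μ {ω | s < X ω ^ δ} = ENNReal.ofReal (Real.exp (-(a * s))) := by
  have hset : {ω | s < X ω ^ δ} = {ω | s ^ δ⁻¹ < X ω} := by
    ext ω
    exact (Real.rpow_inv_lt_iff_of_pos hs (hXpos ω).le hδ).symm
  rw [hset, htail _ (Real.rpow_nonneg hs _), ← Real.rpow_mul hs, inv_mul_cancel₀ hδ.ne',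
    Real.rpow_one, neg_mul]

lemma lintegral_Ioi_ofReal_one_sub_rpow {ρ : ℝ} (hρ : 0 < ρ) :
    ∫⁻ u in Ioi 0, ENNReal.ofReal (1 - u ^ ρ) = ENNReal.ofReal (ρ / (ρ + 1)) := by
  have hvanish : ∫⁻ u in Ioi 1, ENNReal.ofReal (1 - u ^ ρ) = 0 := by
    refine setLIntegral_eq_zero measurableSet_Ioi fun u (hu : 1 < u) => ?_
    exact ENNReal.ofReal_eq_zero.2 (sub_nonpos.2 (Real.one_le_rpow hu.le hρ.le))
  have hcont : Continuous fun u : ℝ => 1 - u ^ ρ :=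
    continuous_const.sub (Real.continuous_rpow_const hρ.le)
  rw [← Ioc_union_Ioi_eq_Ioi zero_le_one, lintegral_union measurableSet_Ioi Ioc_disjoint_Ioi_same,
    hvanish, add_zero, ← ofReal_integral_eq_lintegral_ofReal
      (hcont.integrableOn_Icc.mono_set Ioc_subset_Icc_self)
      ((ae_restrict_iff' measurableSet_Ioc).2 (ae_of_all _ fun u hu =>
        sub_nonneg.2 (Real.rpow_le_one hu.1.le hu.2 hρ.le))),
    ← intervalIntegral.integral_of_le zero_le_one, intervalIntegral.integral_sub
      intervalIntegrable_const (intervalIntegral.intervalIntegrable_rpow' (by linarith)),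
    integral_rpow (Or.inl (by linarith))]
  congr 1
  rw [intervalIntegral.integral_const, Real.one_rpow, Real.zero_rpow (by linarith)]
  field_simp
  ring

lemma measure_le_exp_neg_mul_of_exponential_tail {P : Measure Ω} [IsProbabilityMeasure P]
    {Y : Ω → ℝ} (hY : Measurable Y) {a b : ℝ} (ha : 0 ≤ a) (hb : 0 < b)
    (htail : ∀ s : ℝ, 0 ≤ s → P {ω | s < Y ω} = ENNReal.ofReal (Real.exp (-(a * s))))
    {u : ℝ} (hu : 0 < u) :
    P {ω | u ≤ Real.exp (-(b * Y ω))} = ENNReal.ofReal (1 - u ^ (a / b)) := by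
  set r := -Real.log u / b
  have hset : {ω | u ≤ Real.exp (-(b * Y ω))} = {ω | r < Y ω}ᶜ := by
    ext ω
    simp only [mem_ofPred_eq, mem_compl_iff, not_lt, r, ← Real.log_le_iff_le_exp hu,
      le_div_iff₀ hb]
    constructor <;> intro h <;> linarith
  rw [hset, prob_compl_eq_one_sub (measurableSet_lt measurable_const hY)]
  rcases le_or_gt 0 r with hr | hr
  · rw [htail r hr, ← ENNReal.ofReal_one, ← ENNReal.ofReal_sub _ (Real.exp_pos _).le,
      Real.rpow_def_of_pos hu]
    congr 3
    simp only [r]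
    field_simp
  · have hu1 : 1 < u := by
      have := (div_lt_iff₀ hb).1 hr
      exact (Real.log_pos_iff hu.le).1 (by linarith)
    have hfull : P {ω | r < Y ω} = 1 := by
      refine le_antisymm prob_le_one ?_
      calc (1 : ENNReal) = P {ω | 0 < Y ω} := by simp [htail 0 le_rfl]
        _ ≤ P {ω | r < Y ω} := measure_mono fun ω (h : 0 < Y ω) => hr.trans h
    rw [hfull, tsub_self, eq_comm, ENNReal.ofReal_eq_zero, sub_nonpos]
    exact Real.one_le_rpow hu1.le (div_nonneg ha hb.le)

lemma lintegral_exp_neg_mul_of_exponential_tail {P : Measure Ω} [IsProbabilityMeasure P]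
    {Y : Ω → ℝ} (hY : Measurable Y) {a b : ℝ} (ha : 0 < a) (hb : 0 ≤ b)
    (htail : ∀ s : ℝ, 0 ≤ s → P {ω | s < Y ω} = ENNReal.ofReal (Real.exp (-(a * s)))) :
    ∫⁻ ω, ENNReal.ofReal (Real.exp (-(b * Y ω))) ∂P = ENNReal.ofReal (a / (a + b)) := by
  rcases hb.eq_or_lt with rfl | hb
  · simp [ha.ne']
  rw [lintegral_eq_lintegral_meas_le P (ae_of_all _ fun ω => (Real.exp_pos _).le)
      (by fun_prop), setLIntegral_congr_fun measurableSet_Ioi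
      fun u hu => measure_le_exp_neg_mul_of_exponential_tail hY ha.le hb htail hu,
    lintegral_Ioi_ofReal_one_sub_rpow (div_pos ha hb)]
  congr 1
  field_simp

lemma ProbabilityTheory.IndepFun.measure_mem_eq_lintegral {α β : Type*} [MeasurableSpace α]
    [MeasurableSpace β] {P : Measure Ω} [IsFiniteMeasure P] {X : Ω → α}
    {Y : Ω → β} (hXY : IndepFun X Y P) (hX : Measurable X) (hY : Measurable Y)
    {S : Set (α × β)} (hS : MeasurableSet S) :
    P {ω | (X ω, Y ω) ∈ S} = ∫⁻ ω, P {ω' | (X ω, Y ω') ∈ S} ∂P := by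
  change P ((fun ω => (X ω, Y ω)) ⁻¹' S) = _
  rw [← Measure.map_apply (hX.prodMk hY) hS, (indepFun_iff_map_prod_eq_prod_map_map
    hX.aemeasurable hY.aemeasurable).1 hXY, Measure.prod_apply hS,
    lintegral_map (measurable_measure_prodMk_left hS) hX]
  refine lintegral_congr fun ω => ?_
  rw [Measure.map_apply hY (measurable_prodMk_left hS)]
  rfl

lemma ProbabilityTheory.iIndepFun.measure_forall_mul_le {ι : Type*} {P : Measure Ω}
    {L : ι → Ω → ℝ} (hindep : iIndepFun L P) (T : Finset ι) {a c : ι → ℝ} (hc : ∀ j, 0 < c j)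
    {δ : ℝ}
    (htail : ∀ j, ∀ s : ℝ, 0 ≤ s →
      P {ω | s < L j ω} = ENNReal.ofReal (Real.exp (-(a j) * s ^ δ)))
    {x : ℝ} (hx : 0 < x) :
    P {ω | ∀ j ∈ T, c j * x ≤ L j ω} =
      ENNReal.ofReal (Real.exp (-((∑ j ∈ T, a j * c j ^ δ) * x ^ δ))) := by
  have hset : {ω | ∀ j ∈ T, c j * x ≤ L j ω} = ⋂ j ∈ T, {ω | c j * x ≤ L j ω} := by
    ext ω
    simp only [mem_ofPred_eq, mem_iInter]
  rw [hset, hindep.meas_biInter (s := fun j => {ω | c j * x ≤ L j ω})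
      fun j _ => ⟨Ici (c j * x), measurableSet_Ici, rfl⟩,
    Finset.sum_mul, ← Finset.sum_neg_distrib, Real.exp_sum,
    ENNReal.ofReal_prod_of_nonneg fun j _ => (Real.exp_pos _).le]
  refine Finset.prod_congr rfl fun j _ => ?_
  rw [measure_le_eq_of_weibull_tail (htail j) (mul_pos (hc j) hx),
    Real.mul_rpow (hc j).le hx.le, neg_mul, mul_assoc]

end

lemma mul_inv_le_mul_inv_iff_div_mul_le {x y u v : ℝ} (hu : 0 < u) (hv : 0 < v) (hy : 0 < y) :
    x * u⁻¹ ≤ y * v⁻¹ ↔ x / y * v ≤ u := by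
  rw [← div_eq_mul_inv, ← div_eq_mul_inv, div_le_div_iff₀ hu hv, div_mul_eq_mul_div,
    div_le_iff₀ hy, mul_comm u]

theorem stmt_1_general {Ω : Type*} [MeasurableSpace Ω] (P : Measure Ω) [IsProbabilityMeasure P]
    (K : ℕ) (L : Fin K → Ω → ℝ) (hLmeas : ∀ j, Measurable (L j))
    (hLpos : ∀ j ω, 0 < L j ω)
    (hindep : iIndepFun L P)
    (a t : Fin K → ℝ) (ha : ∀ j, 0 < a j) (ht : ∀ j, 0 < t j)
    (δ : ℝ) (hδ : δ ∈ Set.Ioo (0 : ℝ) 1)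
    (hccdf : ∀ j, ∀ s : ℝ, 0 ≤ s →
      P {ω | s < L j ω} = ENNReal.ofReal (Real.exp (-(a j) * s ^ δ)))
    (k : Fin K) :
    P {ω | ∀ j, t j * (L j ω)⁻¹ ≤ t k * (L k ω)⁻¹} =
      ENNReal.ofReal (a k / ∑ j, a j * (t j / t k) ^ δ) := by
  set c : Fin K → ℝ := fun j => t j / t k
  have hc : ∀ j, 0 < c j := fun j => div_pos (ht j) (ht k)
  set T := univ.erase k
  set B := ∑ j ∈ T, a j * c j ^ δ
  let Z : Ω → T → ℝ := fun ω j => L j ω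
  let S : Set (ℝ × (T → ℝ)) := {p | ∀ j : T, c j * p.1 ≤ p.2 j}
  have hS : MeasurableSet S := by
    simp only [S, ofPred_forall]
    exact .iInter fun j => measurableSet_le (by fun_prop) (by fun_prop)
  have hevent : {ω | ∀ j, t j * (L j ω)⁻¹ ≤ t k * (L k ω)⁻¹} = {ω | (L k ω, Z ω) ∈ S} := by
    ext ω
    have key : ∀ j, t j * (L j ω)⁻¹ ≤ t k * (L k ω)⁻¹ ↔ c j * L k ω ≤ L j ω := fun j =>
      mul_inv_le_mul_inv_iff_div_mul_le (hLpos j ω) (hLpos k ω) (ht k)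
    simp only [mem_ofPred_eq, S, Z, Subtype.forall, T, mem_erase, Finset.mem_univ, and_true]
    refine ⟨fun h j _ => (key j).1 (h j), fun h j => ?_⟩
    rcases eq_or_ne j k with rfl | hj
    exacts [le_rfl, (key j).2 (h j hj)]
  have hZ : IndepFun (L k) Z P :=
    (hindep.indepFun_finset {k} T (by simp [T]) hLmeas).comp
      (φ := fun v : ({k} : Finset (Fin K)) → ℝ => v ⟨k, mem_singleton_self k⟩) (ψ := id)
      (measurable_pi_apply _) measurable_id
  have hsection : ∀ ω, P {ω' | (L k ω, Z ω') ∈ S} =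
      ENNReal.ofReal (Real.exp (-(B * L k ω ^ δ))) := fun ω =>
    (congrArg P (ext fun _ => Subtype.forall)).trans
      (hindep.measure_forall_mul_le T hc hccdf (hLpos k ω))
  have hsum : ∑ j, a j * (t j / t k) ^ δ = a k + B := by
    rw [← add_sum_erase _ _ (mem_univ k), div_self (ht k).ne', Real.one_rpow, mul_one]
  rw [hevent, hZ.measure_mem_eq_lintegral (hLmeas k) (measurable_pi_lambda _ fun j => hLmeas j)
    hS, lintegral_congr hsection, hsum]
  exact lintegral_exp_neg_mul_of_exponential_tail (by fun_prop) (ha k)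
    (sum_nonneg fun j _ => mul_nonneg (ha j).le (Real.rpow_nonneg (hc j).le δ))
    fun s => measure_lt_rpow_of_weibull_tail (hLpos k) hδ.1 (hccdf k)

/-- Weighted path loss association probability: with independent `L_j` having CCDF
`exp(-a_j t^δ)` and weights `t_j`, the probability of associating with tier `k`
(event `t_k L_k⁻¹ ≥ t_j L_j⁻¹` for all `j`) equals `a_k/G_k`, `G_k = ∑_j a_j (t_j/t_k)^δ`. -/
theorem stmt_1 {Ω : Type*} [MeasurableSpace Ω] (P : Measure Ω) [IsProbabilityMeasure P]
    (K : ℕ) (hK : 0 < K) (L : Fin K → Ω → ℝ) (hLmeas : ∀ j, Measurable (L j))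
    (hLpos : ∀ j ω, 0 < L j ω)
    (hindep : iIndepFun L P)
    (a t : Fin K → ℝ) (ha : ∀ j, 0 < a j) (ht : ∀ j, 0 < t j)
    (δ : ℝ) (hδ : δ ∈ Set.Ioo (0 : ℝ) 1)
    (hccdf : ∀ j, ∀ s : ℝ, 0 ≤ s →
      P {ω | s < L j ω} = ENNReal.ofReal (Real.exp (-(a j) * s ^ δ)))
    (k : Fin K) :
    P {ω | ∀ j, t j * (L j ω)⁻¹ ≤ t k * (L k ω)⁻¹} =
      ENNReal.ofReal (a k / ∑ j, a j * (t j / t k) ^ δ) :=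
  stmt_1_general P K L hLmeas hLpos hindep a t ha ht δ hδ hccdf k
end

section
/- Under the same setup (L_j independent with P(L_j > t) = exp(−a_j t^δ), weights t_j > 0, G_k = ∑_j a_j (t_j/t_k)^δ), the conditional density of L_k given the association event E_k = {t_k L_k^{−1} ≥ t_j L_j^{−1} ∀j} is f(l) = δ G_k l^{δ−1} exp(−G_k l^δ) for l ≥ 0; equivalently, conditioned on E_k, L_k^δ is exponentially distributed with rate G_k. -/
/-! With `X_j := (L_j / t_j) ^ δ`, the `X_j` are independent exponential variables with rates
`λ_j = a_j t_j ^ δ`, the association event is `{X_k = min_j X_j}`, and `{x < L_k ^ δ}` is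
`{x / t_k ^ δ < X_k}`. Disintegrating along `X_k`, which is independent of `(X_j)_{j ≠ k}`, gives
`P(X_k = min_j X_j, X_k > y) = ∫_{u > y} λ_k e^{-λ_k u} e^{-(Λ - λ_k) u} du = (λ_k / Λ) e^{-Λ y}`
with `Λ = ∑_j λ_j`. Hence `P(X_k > y | X_k = min_j X_j) = e^{-Λ y}`, and `Λ / t_k ^ δ = G_k`. -/

open MeasureTheory ProbabilityTheory Finset

open Real Set

theorem MeasureTheory.Measure.ext_of_measure_Ioi_of_nonneg {μ ν : Measure ℝ}
    [IsProbabilityMeasure μ] [IsProbabilityMeasure ν] (h : ∀ s, 0 ≤ s → μ (Ioi s) = ν (Ioi s))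
    (hν : ν (Ioi 0) = 1) : μ = ν := by
  have hIic : ∀ ρ : Measure ℝ, [IsProbabilityMeasure ρ] → ∀ s, ρ (Iic s) = 1 - ρ (Ioi s) :=
    fun ρ _ s => by rw [← compl_Ioi, prob_compl_eq_one_sub measurableSet_Ioi]
  refine Measure.ext_of_Iic μ ν fun s => ?_
  rcases le_or_gt 0 s with hs | hs
  · rw [hIic, hIic, h s hs]
  · have hnull : ∀ ρ : Measure ℝ, [IsProbabilityMeasure ρ] → ρ (Ioi 0) = 1 → ρ (Iic s) = 0 :=
      fun ρ _ hρ => measure_mono_null (Iic_subset_Iic.2 hs.le) (by rw [hIic, hρ, tsub_self])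
    rw [hnull ν hν, hnull μ (by rw [h 0 le_rfl, hν])]

namespace ProbabilityTheory

variable {r : ℝ}

lemma expMeasure_eq_withDensity (r : ℝ) : expMeasure r = volume.withDensity (exponentialPDF r) :=
  rfl

lemma expMeasure_singleton (r s : ℝ) : expMeasure r {s} = 0 :=
  withDensity_absolutelyContinuous _ _ (measure_singleton s)

lemma expMeasure_Ioi (hr : 0 < r) {s : ℝ} (hs : 0 ≤ s) :
    expMeasure r (Ioi s) = ENNReal.ofReal (exp (-(r * s))) := by
  have := isProbabilityMeasure_expMeasure hr
  have hexp_le : exp (-(r * s)) ≤ 1 := exp_le_one_iff.2 (by nlinarith)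
  rw [← compl_Iic, prob_compl_eq_one_sub measurableSet_Iic, ← ofReal_cdf, cdf_expMeasure_eq hr,
    if_pos hs, ← ENNReal.ofReal_one, ← ENNReal.ofReal_sub _ (by linarith), sub_sub_cancel]

lemma expMeasure_Ici (hr : 0 < r) {s : ℝ} (hs : 0 ≤ s) :
    expMeasure r (Ici s) = ENNReal.ofReal (exp (-(r * s))) := by
  rw [← measure_congr (Ioi_ae_eq_Ici' (expMeasure_singleton r s)), expMeasure_Ioi hr hs]

lemma map_eq_expMeasure_of_measure_lt {Ω : Type*} [MeasurableSpace Ω] {P : Measure Ω}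
    [IsProbabilityMeasure P] {X : Ω → ℝ} (hX : Measurable X) (hr : 0 < r)
    (hccdf : ∀ s, 0 ≤ s → P {ω | s < X ω} = ENNReal.ofReal (exp (-(r * s)))) :
    P.map X = expMeasure r := by
  have := isProbabilityMeasure_expMeasure hr
  have := Measure.isProbabilityMeasure_map (μ := P) hX.aemeasurable
  refine Measure.ext_of_measure_Ioi_of_nonneg (fun s hs => ?_)
    (by simp [expMeasure_Ioi hr le_rfl])
  rw [Measure.map_apply hX measurableSet_Ioi, expMeasure_Ioi hr hs]
  exact hccdf s hs

lemma setLIntegral_Ioi_exp_expMeasure (hr : 0 < r) {β y : ℝ} (hβ : 0 ≤ β) (hy : 0 ≤ y) :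
    ∫⁻ u in Ioi y, ENNReal.ofReal (exp (-(β * u))) ∂expMeasure r =
      ENNReal.ofReal (r / (r + β) * exp (-((r + β) * y))) := by
  have hrβ : 0 < r + β := by linarith
  have hpdf : ∀ r, Measurable (exponentialPDF r) :=
    fun r => (measurable_exponentialPDFReal r).ennreal_ofReal
  have hdensity : ∀ u ∈ Ioi y,
      (exponentialPDF r * fun u => ENNReal.ofReal (exp (-(β * u)))) u =
        ENNReal.ofReal (r / (r + β)) * exponentialPDF (r + β) u := by
    intro u hu
    have hu : 0 ≤ u := hy.trans (le_of_lt hu)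
    rw [Pi.mul_apply, exponentialPDF_of_nonneg hu, exponentialPDF_of_nonneg hu,
      ← ENNReal.ofReal_mul (by positivity), ← ENNReal.ofReal_mul (by positivity)]
    congr 1
    field_simp
    rw [← exp_add]
    ring_nf
  rw [expMeasure_eq_withDensity, restrict_withDensity measurableSet_Ioi,
    lintegral_withDensity_eq_lintegral_mul _ (hpdf r) (by fun_prop),
    setLIntegral_congr_fun measurableSet_Ioi hdensity, lintegral_const_mul _ (hpdf _),
    ← withDensity_apply _ measurableSet_Ioi, ← expMeasure_eq_withDensity, expMeasure_Ioi hrβ hy,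
    ← ENNReal.ofReal_mul (by positivity)]

lemma IndepFun.measure_preimage_prodMk {Ω α β : Type*} [MeasurableSpace Ω] [MeasurableSpace α]
    [MeasurableSpace β] {P : Measure Ω} [IsFiniteMeasure P] {X : Ω → α} {Y : Ω → β}
    (hXY : IndepFun X Y P) (hX : Measurable X) (hY : Measurable Y) {S : Set (α × β)}
    (hS : MeasurableSet S) :
    P ((fun ω => (X ω, Y ω)) ⁻¹' S) = ∫⁻ x, P.map Y (Prod.mk x ⁻¹' S) ∂P.map X := by
  rw [← Measure.map_apply (hX.prodMk hY) hS,
    hXY.map_prod_eq_prod_map_map hX.aemeasurable hY.aemeasurable, Measure.prod_apply hS]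

section IndependentExponentials

variable {Ω ι : Type*} [MeasurableSpace Ω] {P : Measure Ω} {X : ι → Ω → ℝ} {lam : ι → ℝ}

lemma iIndepFun.measure_forall_le_of_expMeasure (hind : iIndepFun X P)
    (hlaw : ∀ j, P.map (X j) = expMeasure (lam j)) (hlam : ∀ j, 0 < lam j)
    (hXm : ∀ j, Measurable (X j))
    (s : Finset ι) {u : ℝ} (hu : 0 ≤ u) :
    P {ω | ∀ j ∈ s, u ≤ X j ω} = ENNReal.ofReal (exp (-((∑ j ∈ s, lam j) * u))) := by
  have hset : {ω | ∀ j ∈ s, u ≤ X j ω} = ⋂ j ∈ s, X j ⁻¹' Ici u := by ext; simp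
  have hfactor : ∀ j ∈ s, P (X j ⁻¹' Ici u) = ENNReal.ofReal (exp (-(lam j * u))) := fun j _ => by
    rw [← Measure.map_apply (hXm j) measurableSet_Ici, hlaw j, expMeasure_Ici (hlam j) hu]
  rw [hset, hind.meas_biInter fun j _ => ⟨Ici u, measurableSet_Ici, rfl⟩, prod_congr rfl hfactor,
    ← ENNReal.ofReal_prod_of_nonneg fun j _ => (exp_pos _).le, ← exp_sum, sum_mul,
    ← sum_neg_distrib]

variable [Fintype ι] [DecidableEq ι]

lemma iIndepFun.measure_forall_le_inter_lt_of_expMeasure (hind : iIndepFun X P)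
    (hlaw : ∀ j, P.map (X j) = expMeasure (lam j)) (hlam : ∀ j, 0 < lam j)
    (hXm : ∀ j, Measurable (X j))
    (k : ι) {y : ℝ} (hy : 0 ≤ y) :
    P ({ω | ∀ j, X k ω ≤ X j ω} ∩ {ω | y < X k ω}) =
      ENNReal.ofReal (lam k / (∑ j, lam j) * exp (-((∑ j, lam j) * y))) := by
  have := hind.isProbabilityMeasure
  set s := univ.erase k
  set Y : Ω → s → ℝ := fun ω i => X i ω
  have hY : Measurable Y := measurable_pi_lambda _ fun i => hXm i
  have hindep : IndepFun (X k) Y P :=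
    (hind.indepFun_finset {k} s (by simp [s]) hXm).comp
      (measurable_pi_apply (⟨k, mem_singleton_self k⟩ : ({k} : Finset ι))) measurable_id
  set S : Set (ℝ × (s → ℝ)) := {p | (∀ i, p.1 ≤ p.2 i) ∧ y < p.1}
  have hS : MeasurableSet S := by
    simp only [S, ofPred_and, ofPred_forall]
    exact (MeasurableSet.iInter fun i => measurableSet_le measurable_fst
      ((measurable_pi_apply i).comp measurable_snd)).inter (measurable_fst measurableSet_Ioi)
  have hevent : {ω | ∀ j, X k ω ≤ X j ω} ∩ {ω | y < X k ω} = (fun ω => (X k ω, Y ω)) ⁻¹' S := by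
    ext ω
    simp only [mem_inter_iff, mem_ofPred_eq, Set.mem_preimage, S, Y, Subtype.forall, s, mem_erase]
    exact and_congr_left' ⟨fun h j _ => h j, fun h j => (eq_or_ne j k).elim (fun e => e ▸ le_rfl)
      fun hj => h j ⟨hj, mem_univ j⟩⟩
  have hfiber : ∀ u ∈ Ioi y, P.map Y {v | ∀ i, u ≤ v i} =
      ENNReal.ofReal (exp (-((∑ j ∈ s, lam j) * u))) := fun u hu => by
    have hcone : MeasurableSet {v : s → ℝ | ∀ i, u ≤ v i} := by
      simp only [ofPred_forall]
      exact MeasurableSet.iInter fun i => measurableSet_le measurable_const (measurable_pi_apply i)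
    rw [Measure.map_apply hY hcone,
      ← hind.measure_forall_le_of_expMeasure hlaw hlam hXm s (hy.trans (le_of_lt hu))]
    congr 1
    ext ω
    simp [Y]
  have hsum : lam k + ∑ j ∈ s, lam j = ∑ j, lam j := add_sum_erase _ _ (mem_univ k)
  calc P ({ω | ∀ j, X k ω ≤ X j ω} ∩ {ω | y < X k ω})
      = ∫⁻ u, P.map Y (Prod.mk u ⁻¹' S) ∂expMeasure (lam k) := by
        rw [hevent, hindep.measure_preimage_prodMk (hXm k) hY hS, hlaw k]
    _ = ∫⁻ u in Ioi y, P.map Y {v | ∀ i, u ≤ v i} ∂expMeasure (lam k) := by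
        rw [← lintegral_indicator measurableSet_Ioi]
        congr 1
        funext u
        by_cases hu : y < u <;> simp [S, hu]
    _ = _ := by
        rw [setLIntegral_congr_fun measurableSet_Ioi hfiber,
          setLIntegral_Ioi_exp_expMeasure (hlam k) (sum_nonneg fun j _ => (hlam j).le) hy, hsum]

lemma iIndepFun.cond_lt_forall_le_of_expMeasure (hind : iIndepFun X P)
    (hlaw : ∀ j, P.map (X j) = expMeasure (lam j)) (hlam : ∀ j, 0 < lam j)
    (hXm : ∀ j, Measurable (X j))
    (k : ι) {y : ℝ} (hy : 0 ≤ y) :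
    P[{ω | y < X k ω} | {ω | ∀ j, X k ω ≤ X j ω}] =
      ENNReal.ofReal (exp (-((∑ j, lam j) * y))) := by
  have := hind.isProbabilityMeasure
  have hE : MeasurableSet {ω | ∀ j, X k ω ≤ X j ω} := by
    simp only [ofPred_forall]
    exact MeasurableSet.iInter fun j => measurableSet_le (hXm k) (hXm j)
  have hpos : P {ω | 0 < X k ω} = 1 := by
    change P (X k ⁻¹' Ioi 0) = 1
    rw [← Measure.map_apply (hXm k) measurableSet_Ioi, hlaw k,
      expMeasure_Ioi (hlam k) le_rfl, mul_zero, neg_zero, exp_zero, ENNReal.ofReal_one]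
  have hPE : P {ω | ∀ j, X k ω ≤ X j ω} = ENNReal.ofReal (lam k / ∑ j, lam j) := by
    have hnull : P {ω | 0 < X k ω}ᶜ = 0 :=
      (prob_compl_eq_zero_iff (measurableSet_lt measurable_const (hXm k))).2 hpos
    rw [← measure_inter_conull hnull,
      hind.measure_forall_le_inter_lt_of_expMeasure hlaw hlam hXm k le_rfl, mul_zero, neg_zero,
      exp_zero, mul_one]
  have hc : 0 < lam k / ∑ j, lam j :=
    div_pos (hlam k) (sum_pos (fun j _ => hlam j) ⟨k, mem_univ k⟩)
  rw [cond_apply hE, hPE, hind.measure_forall_le_inter_lt_of_expMeasure hlaw hlam hXm k hy,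
    ENNReal.ofReal_mul hc.le, ← mul_assoc,
    ENNReal.inv_mul_cancel (ENNReal.ofReal_pos.2 hc).ne' ENNReal.ofReal_ne_top, one_mul]

end IndependentExponentials

end ProbabilityTheory

lemma Real.lt_div_rpow_iff {δ s l t : ℝ} (hδ : 0 < δ) (hs : 0 ≤ s) (hl : 0 ≤ l) (ht : 0 < t) :
    s < (l / t) ^ δ ↔ t * s ^ δ⁻¹ < l := by
  rw [← rpow_inv_lt_iff_of_pos hs (div_nonneg hl ht.le) hδ, lt_div_iff₀ ht, mul_comm]

lemma measure_lt_div_rpow {Ω : Type*} [MeasurableSpace Ω] {P : Measure Ω} {L : Ω → ℝ}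
    (hL : ∀ ω, 0 ≤ L ω) {a t δ : ℝ} (ht : 0 < t) (hδ : 0 < δ)
    (hccdf : ∀ s, 0 ≤ s → P {ω | s < L ω} = ENNReal.ofReal (exp (-a * s ^ δ))) {s : ℝ}
    (hs : 0 ≤ s) :
    P {ω | s < (L ω / t) ^ δ} = ENNReal.ofReal (exp (-(a * t ^ δ * s))) := by
  simp_rw [lt_div_rpow_iff hδ hs (hL _) ht]
  rw [hccdf _ (by positivity), mul_rpow ht.le (by positivity), rpow_inv_rpow hs hδ.ne']
  ring_nf

theorem stmt_2_general {Ω : Type*} [MeasurableSpace Ω] (P : Measure Ω) [IsProbabilityMeasure P]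
    (K : ℕ) (L : Fin K → Ω → ℝ) (hLmeas : ∀ j, Measurable (L j))
    (hLpos : ∀ j ω, 0 < L j ω)
    (hindep : iIndepFun L P)
    (a t : Fin K → ℝ) (ha : ∀ j, 0 < a j) (ht : ∀ j, 0 < t j)
    (δ : ℝ) (hδ : δ ∈ Set.Ioo (0 : ℝ) 1)
    (hccdf : ∀ j, ∀ s : ℝ, 0 ≤ s →
      P {ω | s < L j ω} = ENNReal.ofReal (Real.exp (-(a j) * s ^ δ)))
    (k : Fin K) (x : ℝ) (hx : 0 ≤ x) :
    P[{ω | x < L k ω ^ δ} | {ω | ∀ j, t j * (L j ω)⁻¹ ≤ t k * (L k ω)⁻¹}] =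
      ENNReal.ofReal (Real.exp (-(∑ j, a j * (t j / t k) ^ δ) * x)) := by
  obtain ⟨hδ0, -⟩ := hδ
  have hrate : ∀ j, 0 < a j * t j ^ δ := fun j => mul_pos (ha j) (rpow_pos_of_pos (ht j) δ)
  set X : Fin K → Ω → ℝ := fun j ω => (L j ω / t j) ^ δ
  have hXm : ∀ j, Measurable (X j) := fun j => ((hLmeas j).div_const _).pow_const _
  have hind : iIndepFun X P := hindep.comp _ fun j => (measurable_id.div_const _).pow_const _
  have hlaw : ∀ j, P.map (X j) = expMeasure (a j * t j ^ δ) := fun j =>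
    map_eq_expMeasure_of_measure_lt (hXm j) (hrate j) fun s hs =>
      measure_lt_div_rpow (fun ω => (hLpos j ω).le) (ht j) hδ0 (hccdf j) hs
  have hE : {ω | ∀ j, t j * (L j ω)⁻¹ ≤ t k * (L k ω)⁻¹} = {ω | ∀ j, X k ω ≤ X j ω} := by
    ext ω
    refine forall_congr' fun j => ?_
    rw [rpow_le_rpow_iff (div_pos (hLpos k ω) (ht k)).le (div_pos (hLpos j ω) (ht j)).le hδ0,
      ← div_eq_mul_inv, ← div_eq_mul_inv, ← inv_div (L j ω), ← inv_div (L k ω),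
      inv_le_inv₀ (div_pos (hLpos j ω) (ht j)) (div_pos (hLpos k ω) (ht k))]
  have hA : {ω | x < L k ω ^ δ} = {ω | x / t k ^ δ < X k ω} := by
    ext ω
    simp only [mem_ofPred_eq, X, div_rpow (hLpos k ω).le (ht k).le,
      div_lt_div_iff_of_pos_right (rpow_pos_of_pos (ht k) δ)]
  rw [hE, hA, hind.cond_lt_forall_le_of_expMeasure hlaw hrate hXm k
    (div_nonneg hx (rpow_pos_of_pos (ht k) δ).le)]
  have hG : ∑ j, a j * (t j / t k) ^ δ = (∑ j, a j * t j ^ δ) / t k ^ δ := by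
    rw [sum_div]
    exact sum_congr rfl fun j _ => by rw [div_rpow (ht j).le (ht k).le, mul_div_assoc]
  rw [hG]
  ring_nf

/-- Conditioned on the association event `E_k = {t_k L_k⁻¹ ≥ t_j L_j⁻¹ ∀ j}`, the path loss
`L_k` has density `δ G_k l^{δ-1} exp(-G_k l^δ)`; equivalently, `L_k^δ` is exponentially
distributed with rate `G_k = ∑_j a_j (t_j/t_k)^δ`. -/
theorem stmt_2 {Ω : Type*} [MeasurableSpace Ω] (P : Measure Ω) [IsProbabilityMeasure P]
    (K : ℕ) (hK : 0 < K) (L : Fin K → Ω → ℝ) (hLmeas : ∀ j, Measurable (L j))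
    (hLpos : ∀ j ω, 0 < L j ω)
    (hindep : iIndepFun L P)
    (a t : Fin K → ℝ) (ha : ∀ j, 0 < a j) (ht : ∀ j, 0 < t j)
    (δ : ℝ) (hδ : δ ∈ Set.Ioo (0 : ℝ) 1)
    (hccdf : ∀ j, ∀ s : ℝ, 0 ≤ s →
      P {ω | s < L j ω} = ENNReal.ofReal (Real.exp (-(a j) * s ^ δ)))
    (k : Fin K) (x : ℝ) (hx : 0 ≤ x) :
    P[{ω | x < L k ω ^ δ} | {ω | ∀ j, t j * (L j ω)⁻¹ ≤ t k * (L k ω)⁻¹}] =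
      ENNReal.ofReal (Real.exp (-(∑ j, a j * (t j / t k) ^ δ) * x)) :=
  stmt_2_general P K L hLmeas hLpos hindep a t ha ht δ hδ hccdf k x hx
end
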